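/- Let m ≥ 2, let Q : (0,∞) → ℝ be a positive non-decreasing function with Q(t) = o(t²) as t → +∞. Let b : ℝ^m → ℝ be continuous with b(x) ≥ 1/Q(|x|) for all x with |x| > 0, and let f : ℝ → ℝ be continuous. Suppose u ∈ C²(ℝ^m) satisfies u* := sup_{ℝ^m} u < +∞ and Δu(x) ≥ b(x) f(u(x)) for every x in the set Ω_γ = {x ∈ ℝ^m : u(x) > γ}, for some γ < u*. If moreover liminf_{r→+∞} (Q(r)/r²) ∫_{B_r} |u|^p dx < +∞ for some p > 0, where B_r is the Euclidean ball of radius r centered at the origin, then f(u*) ≤ 0. -/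

import Mathlib

/-!
If `f (u*) > 0`, then by continuity `f ∘ u ≥ f (u*) / 2` wherever `u` is close to `u*`, and there
`Q(|x|) Δu ≥ Q(|x|) b f(u) ≥ f (u*) / 2`. This contradicts the weak maximum principle for `Q Δ`,
which holds because `Q(r) = O(r²)`: for small `A > 0` the function `u - A log (1 + |x|²)` tends to
`-∞`, so it attains a global maximum at some `z` with `u z` close to `u*`, and there
`Δu(z) ≤ A Δ log (1 + |x|²) (z) ≤ 2 m A / (1 + |z|²)`, making `Q(|z|) Δu(z)` as small as we like.
-/

open Filter Asymptotics

/-- The Laplacian on Euclidean space: the sum of the pure second partial derivatives. -/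
noncomputable def euclideanLaplacian {m : ℕ} (u : EuclideanSpace ℝ (Fin m) → ℝ)
    (x : EuclideanSpace ℝ (Fin m)) : ℝ :=
  ∑ i, fderiv ℝ (fun y => fderiv ℝ u y (EuclideanSpace.single i 1)) x (EuclideanSpace.single i 1)

open Topology Laplacian RealInnerProductSpace

theorem IsLocalMax.deriv_deriv_nonpos {f : ℝ → ℝ} {a : ℝ} (h : IsLocalMax f a)
    (hc : ContinuousAt f a) : deriv (deriv f) a ≤ 0 := by
  by_contra! hpos
  have hmin : IsLocalMin f a := isLocalMin_of_deriv_deriv_pos hpos h.deriv_eq_zero hc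
  have hconst : f =ᶠ[𝓝 a] fun _ => f a := (h.and hmin).mono fun x hx => le_antisymm hx.1 hx.2
  have : deriv f =ᶠ[𝓝 a] fun _ => 0 := hconst.deriv.trans (by simp)
  simp [this.deriv_eq] at hpos

section NormedSpace

variable {E : Type*} [NormedAddCommGroup E] [NormedSpace ℝ E] {g : E → ℝ} {z : E}

theorem hasDerivAt_add_smul (z v : E) (t : ℝ) : HasDerivAt (fun t : ℝ => z + t • v) v t := by
  simpa using ((hasDerivAt_id t).smul_const v).const_add z

theorem tendsto_add_smul_nhds_zero (z v : E) :
    Tendsto (fun t : ℝ => z + t • v) (𝓝 0) (𝓝 z) := by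
  simpa using (hasDerivAt_add_smul z v 0).continuousAt.tendsto

theorem ContDiffAt.deriv_deriv_comp_add_smul (hg : ContDiffAt ℝ 2 g z) (v : E) :
    deriv (deriv fun t : ℝ => g (z + t • v)) 0 = fderiv ℝ (fderiv ℝ g) z v v := by
  have hdiff : ∀ᶠ t in 𝓝 (0 : ℝ), DifferentiableAt ℝ g (z + t • v) := by
    exact (tendsto_add_smul_nhds_zero z v).eventually ((hg.eventually (by simp)).mono fun y hy =>
      hy.differentiableAt (by simp))
  have hderiv : deriv (fun t : ℝ => g (z + t • v)) =ᶠ[𝓝 0] fun t => fderiv ℝ g (z + t • v) v :=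
    hdiff.mono fun t ht => (ht.hasFDerivAt.comp_hasDerivAt t (hasDerivAt_add_smul z v t)).deriv
  have hfderiv : HasFDerivAt (fderiv ℝ g) (fderiv ℝ (fderiv ℝ g) z) (z + (0 : ℝ) • v) := by
    rw [zero_smul, add_zero]
    have h1 : ContDiffAt ℝ 1 (fderiv ℝ g) z := hg.fderiv_right (m := 1) (by norm_num)
    exact (h1.differentiableAt one_ne_zero).hasFDerivAt
  have hline := hfderiv.comp_hasDerivAt (0 : ℝ) (hasDerivAt_add_smul z v 0)
  have hsecond := hline.clm_apply (hasDerivAt_const (0 : ℝ) v)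
  rw [map_zero, add_zero] at hsecond
  rw [hderiv.deriv_eq]
  exact hsecond.deriv

theorem IsLocalMax.fderiv_fderiv_apply_nonpos (h : IsLocalMax g z) (hg : ContDiffAt ℝ 2 g z)
    (v : E) : fderiv ℝ (fderiv ℝ g) z v v ≤ 0 := by
  rw [← hg.deriv_deriv_comp_add_smul v]
  refine IsLocalMax.deriv_deriv_nonpos ?_ ?_
  · exact ((tendsto_add_smul_nhds_zero z v).eventually h).mono fun t ht => by simpa using ht
  · exact hg.continuousAt.comp_of_eq (hasDerivAt_add_smul z v 0).continuousAt (by simp)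

end NormedSpace

theorem tendsto_log_one_add_norm_sq_cocompact {E : Type*} [NormedAddCommGroup E] [ProperSpace E] :
    Tendsto (fun x : E => Real.log (1 + ‖x‖ ^ 2)) (cocompact E) atTop :=
  Real.tendsto_log_atTop.comp <| tendsto_atTop_add_const_left _ 1 <|
    (tendsto_pow_atTop two_ne_zero).comp tendsto_norm_cocompact_atTop

theorem exists_forall_sub_mul_log_one_add_norm_sq_le {E : Type*} [NormedAddCommGroup E]
    [ProperSpace E] {u : E → ℝ} (hu : Continuous u) (hbdd : BddAbove (Set.range u)) {A : ℝ}
    (hA : 0 < A) :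
    ∃ z, ∀ y, u y - A * Real.log (1 + ‖y‖ ^ 2) ≤ u z - A * Real.log (1 + ‖z‖ ^ 2) := by
  obtain ⟨M, hM⟩ := hbdd
  refine (hu.sub (continuous_const.mul ((by fun_prop : Continuous fun y : E => 1 + ‖y‖ ^ 2).log
    fun y => by positivity))).exists_forall_ge ?_
  refine tendsto_atBot_mono (fun x => ?_) <| tendsto_atBot_add_const_left _ M <|
    tendsto_neg_atTop_atBot.comp (tendsto_log_one_add_norm_sq_cocompact.const_mul_atTop hA)
  simpa [sub_eq_add_neg] using hM (Set.mem_range_self x)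

section InnerProductSpace

variable {E : Type*} [NormedAddCommGroup E] [InnerProductSpace ℝ E]

theorem contDiff_log_one_add_norm_sq {n : WithTop ℕ∞} :
    ContDiff ℝ n fun x : E => Real.log (1 + ‖x‖ ^ 2) :=
  (contDiff_const.add (contDiff_norm_sq ℝ)).log fun x => by positivity

theorem fderiv_fderiv_log_one_add_norm_sq_apply_le (z v : E) :
    fderiv ℝ (fderiv ℝ fun x : E => Real.log (1 + ‖x‖ ^ 2)) z v v ≤
      2 * ‖v‖ ^ 2 / (1 + ‖z‖ ^ 2) := by
  rw [← contDiff_log_one_add_norm_sq.contDiffAt.deriv_deriv_comp_add_smul v]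
  have hline := hasDerivAt_add_smul z v
  have hpos : ∀ t : ℝ, 0 < 1 + ‖z + t • v‖ ^ 2 := fun t => by positivity
  have hfirst : deriv (fun t : ℝ => Real.log (1 + ‖z + t • v‖ ^ 2))
      = fun t => 2 * ⟪z + t • v, v⟫ / (1 + ‖z + t • v‖ ^ 2) := by
    funext t
    exact (((hline t).norm_sq.const_add 1).log (hpos t).ne').deriv
  have hnum : HasDerivAt (fun t : ℝ => 2 * ⟪z + t • v, v⟫) (2 * ‖v‖ ^ 2) 0 := by
    have := ((hline 0).inner ℝ (hasDerivAt_const (0 : ℝ) v)).const_mul 2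
    simpa [real_inner_self_eq_norm_sq] using this
  have hsecond := hnum.fun_div ((hline 0).norm_sq.const_add 1) (hpos 0).ne'
  rw [hfirst, hsecond.deriv]
  simp only [zero_smul, add_zero]
  have ha : 0 < 1 + ‖z‖ ^ 2 := by positivity
  rw [div_le_div_iff₀ (by positivity) ha]
  nlinarith [mul_nonneg (sq_nonneg ⟪z, v⟫) ha.le]

variable [FiniteDimensional ℝ E]

theorem IsLocalMax.laplacian_nonpos {g : E → ℝ} {z : E} (h : IsLocalMax g z)
    (hg : ContDiffAt ℝ 2 g z) : Δ g z ≤ 0 := by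
  rw [InnerProductSpace.laplacian_eq_iteratedFDeriv_stdOrthonormalBasis]
  refine Finset.sum_nonpos fun i _ => ?_
  simpa [iteratedFDeriv_two_apply] using h.fderiv_fderiv_apply_nonpos hg _

theorem IsLocalMax.laplacian_le_of_sub {u w : E → ℝ} {z : E} (h : IsLocalMax (u - w) z)
    (hu : ContDiffAt ℝ 2 u z) (hw : ContDiffAt ℝ 2 w z) : Δ u z ≤ Δ w z := by
  have := h.laplacian_nonpos (hu.sub hw)
  rw [hu.laplacian_sub hw] at this
  linarith

theorem laplacian_log_one_add_norm_sq_le (z : E) :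
    Δ (fun x : E => Real.log (1 + ‖x‖ ^ 2)) z ≤ 2 * Module.finrank ℝ E / (1 + ‖z‖ ^ 2) := by
  rw [InnerProductSpace.laplacian_eq_iteratedFDeriv_stdOrthonormalBasis]
  calc _ ≤ ∑ _i : Fin (Module.finrank ℝ E), 2 / (1 + ‖z‖ ^ 2) := by
        refine Finset.sum_le_sum fun i _ => ?_
        simpa [iteratedFDeriv_two_apply] using
          fderiv_fderiv_log_one_add_norm_sq_apply_le z (stdOrthonormalBasis ℝ E i)
    _ = _ := by simp; ring

theorem exists_lt_mul_laplacian_lt {u : E → ℝ} (hu : ContDiff ℝ 2 u)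
    (hbdd : BddAbove (Set.range u)) {q : E → ℝ} {K : ℝ} (hq0 : ∀ x, 0 ≤ q x)
    (hqK : ∀ x, q x ≤ K * (1 + ‖x‖ ^ 2)) {γ η : ℝ} (hγ : γ < ⨆ x, u x) (hη : 0 < η) :
    ∃ x, γ < u x ∧ q x * Δ u x < η := by
  obtain ⟨x₀, hx₀⟩ := exists_lt_of_lt_ciSup hγ
  set ψ : E → ℝ := fun x => Real.log (1 + ‖x‖ ^ 2)
  set n : ℝ := (Module.finrank ℝ E : ℝ)
  obtain ⟨A, hAx₀, hAη, hA⟩ : ∃ A, A * ψ x₀ < u x₀ - γ ∧ A * (2 * n * K) < η ∧ 0 < A := by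
    have hsmall : ∀ c : ℝ, Tendsto (fun A : ℝ => A * c) (𝓝[>] 0) (𝓝 0) := fun c => by
      simpa using ((continuous_mul_const c).tendsto' 0 0 (zero_mul c)).mono_left
        nhdsWithin_le_nhds
    exact (((hsmall _).eventually_lt_const (by linarith)).and
      (((hsmall _).eventually_lt_const hη).and self_mem_nhdsWithin)).exists
  have hψ0 : ∀ x, 0 ≤ ψ x := fun x => Real.log_nonneg (le_add_of_nonneg_right (by positivity))
  have hψ : ContDiff ℝ 2 ψ := contDiff_log_one_add_norm_sq
  have hAψ : ContDiff ℝ 2 (A • ψ) := hψ.const_smul A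
  obtain ⟨z, hz⟩ := exists_forall_sub_mul_log_one_add_norm_sq_le hu.continuous hbdd hA
  have huz : γ < u z := by linarith [hz x₀, mul_nonneg hA.le (hψ0 z)]
  have hΔu : Δ u z ≤ A * (2 * n / (1 + ‖z‖ ^ 2)) := calc
    Δ u z ≤ Δ (A • ψ) z :=
      IsLocalMax.laplacian_le_of_sub (Eventually.of_forall hz) hu.contDiffAt hAψ.contDiffAt
    _ = A * Δ ψ z := InnerProductSpace.laplacian_smul A hψ.contDiffAt
    _ ≤ A * (2 * n / (1 + ‖z‖ ^ 2)) :=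
      mul_le_mul_of_nonneg_left (laplacian_log_one_add_norm_sq_le z) hA.le
  refine ⟨z, huz, ?_⟩
  calc q z * Δ u z ≤ q z * (A * (2 * n / (1 + ‖z‖ ^ 2))) :=
        mul_le_mul_of_nonneg_left hΔu (hq0 z)
    _ ≤ K * (1 + ‖z‖ ^ 2) * (A * (2 * n / (1 + ‖z‖ ^ 2))) :=
        mul_le_mul_of_nonneg_right (hqK z) (by positivity)
    _ = A * (2 * n * K) := by field_simp
    _ < η := hAη

end InnerProductSpace

theorem euclideanLaplacian_eq_laplacian {m : ℕ} {u : EuclideanSpace ℝ (Fin m) → ℝ}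
    {x : EuclideanSpace ℝ (Fin m)} (hu : ContDiffAt ℝ 2 u x) :
    euclideanLaplacian u x = Δ u x := by
  have hdiff : DifferentiableAt ℝ (fderiv ℝ u) x :=
    (hu.fderiv_right (m := 1) (by norm_num)).differentiableAt one_ne_zero
  rw [InnerProductSpace.laplacian_eq_iteratedFDeriv_orthonormalBasis u
    (EuclideanSpace.basisFun (Fin m) ℝ), euclideanLaplacian]
  refine Finset.sum_congr rfl fun i _ => ?_
  rw [iteratedFDeriv_two_apply, fderiv_clm_apply hdiff (differentiableAt_const _)]
  simp

theorem exists_le_mul_one_add_sq_of_isBigO {q : ℝ → ℝ} (hmono : Monotone q)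
    (hq : q =O[atTop] fun r => r ^ 2) : ∃ K, ∀ r, q r ≤ K * (1 + r ^ 2) := by
  obtain ⟨C, hC⟩ := hq.bound
  obtain ⟨R, hR⟩ := eventually_atTop.1 hC
  refine ⟨max C 0 + |q (max R 0)|, fun r => ?_⟩
  have hK : 0 ≤ max C 0 + |q (max R 0)| := by positivity
  rcases le_total (max R 0) r with hr | hr
  · have h := hR r (le_of_max_le_left hr)
    rw [Real.norm_eq_abs, Real.norm_eq_abs, abs_of_nonneg (sq_nonneg r)] at h
    nlinarith [le_abs_self (q r), le_max_left C 0, abs_nonneg (q (max R 0)), sq_nonneg r]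
  · nlinarith [hmono hr, le_abs_self (q (max R 0)), le_max_right C 0, sq_nonneg r]

theorem one_div_apply_max_norm_one_le {F : Type*} [NormedAddCommGroup F] [NormedSpace ℝ F]
    [Nontrivial F] {Q : ℝ → ℝ} (hQpos : ∀ t > 0, 0 < Q t) (hQmono : MonotoneOn Q (Set.Ioi 0))
    {b : F → ℝ} (hb : Continuous b) (hbQ : ∀ x, 0 < ‖x‖ → 1 / Q ‖x‖ ≤ b x) (x : F) :
    1 / Q (max ‖x‖ 1) ≤ b x := by
  have hle : ∀ y : F, 0 < ‖y‖ → 1 / Q (max ‖y‖ 1) ≤ b y := fun y hy =>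
    (one_div_le_one_div_of_le (hQpos _ hy) (hQmono hy (Set.mem_Ioi.2 (lt_max_of_lt_right one_pos))
      (le_max_left _ _))).trans (hbQ y hy)
  rcases eq_or_ne x 0 with rfl | hx
  · refine ge_of_tendsto (hb.continuousAt.tendsto.mono_left nhdsWithin_le_nhds :
      Tendsto b (𝓝[≠] 0) _) ?_
    filter_upwards [nhdsWithin_le_nhds (Metric.ball_mem_nhds (0 : F) one_pos),
      self_mem_nhdsWithin] with y hy1 hy0
    have h := hle y (norm_pos_iff.2 hy0)
    rwa [max_eq_right (by simp [(mem_ball_zero_iff.1 hy1).le])] at h ⊢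
  · exact hle x (norm_pos_iff.2 hx)

theorem stmt1_general {m : ℕ} (hm : 2 ≤ m) (Q : ℝ → ℝ)
    (hQpos : ∀ t > (0:ℝ), 0 < Q t)
    (hQmono : ∀ s t : ℝ, 0 < s → s ≤ t → Q s ≤ Q t)
    (hQo : Q =o[atTop] fun t => t ^ 2)
    (b : EuclideanSpace ℝ (Fin m) → ℝ) (hb : Continuous b)
    (hbQ : ∀ x : EuclideanSpace ℝ (Fin m), 0 < ‖x‖ → 1 / Q ‖x‖ ≤ b x)
    (f : ℝ → ℝ) (hf : Continuous f)
    (u : EuclideanSpace ℝ (Fin m) → ℝ) (hu : ContDiff ℝ 2 u)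
    (hbdd : BddAbove (Set.range u))
    (γ : ℝ) (hγ : γ < ⨆ x, u x)
    (hineq : ∀ x : EuclideanSpace ℝ (Fin m), γ < u x →
      b x * f (u x) ≤ euclideanLaplacian u x) :
    f (⨆ x, u x) ≤ 0 := by
  by_contra! hpos
  set M := ⨆ x, u x
  obtain ⟨l, hlM, hfl⟩ : ∃ l < M, Set.Ioc l M ⊆ {s | f M / 2 < f s} :=
    mem_nhdsLE_iff_exists_Ioc_subset.1 <| nhdsWithin_le_nhds <|
      continuousAt_const.eventually_lt hf.continuousAt (half_lt_self hpos)
  have : Nonempty (Fin m) := ⟨⟨0, by omega⟩⟩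
  -- `Q` is only controlled on `(0, ∞)`; flattening it on `[0, 1]` gives a positive weight on all
  -- of `ℝ^m`, with `b ≥ 1 / q` extended to the origin by continuity of `b`.
  set q : ℝ → ℝ := fun r => Q (max r 1)
  have hq0 : ∀ r, 0 < q r := fun r => hQpos _ (lt_max_of_lt_right one_pos)
  have hbq : ∀ x, 1 / q ‖x‖ ≤ b x :=
    one_div_apply_max_norm_one_le hQpos (fun s hs t _ hst => hQmono s t hs hst) hb hbQ
  obtain ⟨K, hK⟩ := exists_le_mul_one_add_sq_of_isBigO
    (fun s t hst => hQmono _ _ (lt_max_of_lt_right one_pos) (max_le_max hst le_rfl))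
    (hQo.isBigO.congr' (eventually_ge_atTop 1 |>.mono fun r hr => by simp [max_eq_left hr])
      EventuallyEq.rfl)
  obtain ⟨x, hx, hqx⟩ := exists_lt_mul_laplacian_lt hu hbdd (fun x => (hq0 ‖x‖).le)
    (fun x => hK ‖x‖) (max_lt hγ hlM) (half_pos hpos)
  have hfx : f M / 2 < f (u x) := hfl ⟨(le_max_right _ _).trans_lt hx, le_ciSup hbdd x⟩
  have : f (u x) ≤ q ‖x‖ * Δ u x := calc
    f (u x) = q ‖x‖ * (1 / q ‖x‖ * f (u x)) := by field_simp [(hq0 ‖x‖).ne']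
    _ ≤ q ‖x‖ * (b x * f (u x)) := by gcongr; exacts [(hq0 _).le, by linarith, hbq x]
    _ ≤ q ‖x‖ * Δ u x := by
      rw [← euclideanLaplacian_eq_laplacian hu.contDiffAt]
      exact mul_le_mul_of_nonneg_left (hineq x ((le_max_left _ _).trans_lt hx)) (hq0 _).le
  linarith

theorem stmt1 {m : ℕ} (hm : 2 ≤ m) (Q : ℝ → ℝ)
    (hQpos : ∀ t > (0:ℝ), 0 < Q t)
    (hQmono : ∀ s t : ℝ, 0 < s → s ≤ t → Q s ≤ Q t)
    (hQo : Q =o[atTop] fun t => t ^ 2)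
    (b : EuclideanSpace ℝ (Fin m) → ℝ) (hb : Continuous b)
    (hbQ : ∀ x : EuclideanSpace ℝ (Fin m), 0 < ‖x‖ → 1 / Q ‖x‖ ≤ b x)
    (f : ℝ → ℝ) (hf : Continuous f)
    (u : EuclideanSpace ℝ (Fin m) → ℝ) (hu : ContDiff ℝ 2 u)
    (hbdd : BddAbove (Set.range u))
    (γ : ℝ) (hγ : γ < ⨆ x, u x)
    (hineq : ∀ x : EuclideanSpace ℝ (Fin m), γ < u x →
      b x * f (u x) ≤ euclideanLaplacian u x)
    (p : ℝ) (hp : 0 < p)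
    (hliminf : ∃ C : ℝ, ∃ᶠ r in atTop,
      Q r / r ^ 2 * ∫ x in Metric.ball (0 : EuclideanSpace ℝ (Fin m)) r, |u x| ^ p ≤ C) :
    f (⨆ x, u x) ≤ 0 :=
  stmt1_general hm Q hQpos hQmono hQo b hb hbQ f hf u hu hbdd γ hγ hineq
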